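/- arXiv:1311.1264 — 3 statements merged into one kernel-verified Lean document; each statement's English description precedes it below -/
import Mathlib

section
/- Let G be a simple undirected graph on a finite vertex set V and let i ∈ V. Suppose that for every edge e of G incident to i, u_i(G) ≥ u_i(G − e). Then for every set L of edges of G all incident to i, u_i(G) ≥ u_i(G − L). -/
open scoped Classical

/-- Agent `i`'s payoff in network `G`: sum over agents reachable from `i` of
`δ^(dist-1) * f j`, minus `c` times `i`'s degree. -/
noncomputable def payoff {V : Type*} [Fintype V] (G : SimpleGraph V)
    (f : V → ℝ) (δ c : ℝ) (i : V) : ℝ :=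
  (∑ j : V, if j ≠ i ∧ G.Reachable i j then δ ^ (G.dist i j - 1) * f j else 0)
    - c * (G.degree i : ℝ)

/-!
Write the payoff as the sum over `j` of the benefit from `j`, minus `c` times the degree.
Deleting the edges of `L` lowers the degree by `|L|`. For a fixed `j`, every edge at `i` other
than the first edge of one shortest path from `i` to `j` leaves that path, hence the benefit from
`j`, intact; so at most one edge of `L` causes a loss from `j` on its own, and that loss is at most
the loss from deleting all of `L`, since benefits only shrink in subgraphs. Summing over `j`, the
loss from deleting `L` dominates the sum over `e ∈ L` of the losses from deleting `e` alone, each of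
which is at least `c` by hypothesis.
-/

namespace SimpleGraph

variable {V : Type*} {G : SimpleGraph V}

lemma incidenceSet_deleteEdges (s : Set (Sym2 V)) (v : V) :
    (G.deleteEdges s).incidenceSet v = G.incidenceSet v \ s := by
  ext e
  simp only [incidenceSet, edgeSet_deleteEdges, Set.mem_ofPred_eq, Set.mem_sdiff]
  tauto

lemma degree_deleteEdges_add_ncard {s : Set (Sym2 V)} {v : V} [Fintype (G.neighborSet v)]
    [Fintype ((G.deleteEdges s).neighborSet v)] (hs : s ⊆ G.incidenceSet v) :
    (G.deleteEdges s).degree v + s.ncard = G.degree v := by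
  classical
  simp only [← card_incidenceSet_eq_degree, ← Nat.card_eq_fintype_card, Nat.card_coe_set_eq,
    incidenceSet_deleteEdges]
  exact Set.ncard_sdiff_add_ncard_of_subset hs (Set.toFinite _)

end SimpleGraph

open SimpleGraph

section Benefit

variable {V : Type*} {G H : SimpleGraph V} {f : V → ℝ} {δ : ℝ} {i j : V}

noncomputable def benefit (G : SimpleGraph V) (f : V → ℝ) (δ : ℝ) (i j : V) : ℝ :=
  if j ≠ i ∧ G.Reachable i j then δ ^ (G.dist i j - 1) * f j else 0

-- The instance on `G.neighborSet i` is arbitrary, so that rewriting with this lemma at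
-- `G.deleteEdges s` uses the instance Mathlib infers there rather than the classical one.
lemma payoff_eq_sum_benefit [Fintype V] (G : SimpleGraph V) [Fintype (G.neighborSet i)]
    (f : V → ℝ) (δ c : ℝ) : payoff G f δ c i = ∑ j, benefit G f δ i j - c * G.degree i := by
  unfold payoff benefit
  congr!

lemma benefit_nonneg (hf : ∀ v, 0 ≤ f v) (hδ : 0 ≤ δ) : 0 ≤ benefit G f δ i j := by
  unfold benefit
  split
  · exact mul_nonneg (pow_nonneg hδ _) (hf j)
  · exact le_rfl

lemma benefit_mono (hHG : H ≤ G) (hf : ∀ v, 0 ≤ f v) (hδ0 : 0 ≤ δ) (hδ1 : δ ≤ 1) :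
    benefit H f δ i j ≤ benefit G f δ i j := by
  by_cases hH : j ≠ i ∧ H.Reachable i j
  · rw [benefit, benefit, if_pos hH, if_pos ⟨hH.1, hH.2.mono hHG⟩]
    have hdist : G.dist i j - 1 ≤ H.dist i j - 1 := Nat.sub_le_sub_right (hH.2.dist_anti hHG) 1
    exact mul_le_mul_of_nonneg_right (pow_le_pow_of_le_one hδ0 hδ1 hdist) (hf j)
  · rw [benefit, if_neg hH]
    exact benefit_nonneg hf hδ0

lemma benefit_deleteEdges_of_shortest_walk {s : Set (Sym2 V)} (p : G.Walk i j)
    (hp : p.length = G.dist i j) (hps : ∀ e ∈ p.edges, e ∉ s) :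
    benefit (G.deleteEdges s) f δ i j = benefit G f δ i j := by
  have hreach : (G.deleteEdges s).Reachable i j := ⟨p.toDeleteEdges s hps⟩
  have hdist : (G.deleteEdges s).dist i j = G.dist i j := by
    refine le_antisymm ?_ (hreach.dist_anti (G.deleteEdges_le s))
    calc (G.deleteEdges s).dist i j ≤ (p.toDeleteEdges s hps).length := dist_le _
      _ = G.dist i j := by rw [Walk.length_transfer, hp]
  simp only [benefit, hreach, p.reachable, hdist]

lemma exists_benefit_deleteEdges_eq_of_ne (G : SimpleGraph V) (f : V → ℝ) (δ : ℝ) (i j : V) :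
    ∃ e₀ : Sym2 V, ∀ e, i ∈ e → e ≠ e₀ →
      benefit (G.deleteEdges {e}) f δ i j = benefit G f δ i j := by
  by_cases hij : j ≠ i ∧ G.Reachable i j
  · obtain ⟨p, hpath, hp⟩ := hij.2.exists_path_of_dist
    cases p with
    | nil => exact absurd rfl hij.1
    | @cons _ k _ hik q =>
      refine ⟨s(i, k), fun e hie hne => benefit_deleteEdges_of_shortest_walk _ hp ?_⟩
      have hiq : i ∉ q.support := ((Walk.cons_isPath_iff hik q).mp hpath).2
      rintro e' he' rfl
      rw [Walk.edges_cons, List.mem_cons] at he'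
      rcases he' with rfl | he'q
      · exact hne rfl
      · exact hiq (Walk.mem_support_of_mem_edges he'q hie)
  · refine ⟨s(i, i), fun e _ _ => ?_⟩
    have hij' : ¬(j ≠ i ∧ (G.deleteEdges {e}).Reachable i j) :=
      fun h => hij ⟨h.1, h.2.mono (G.deleteEdges_le _)⟩
    rw [benefit, benefit, if_neg hij, if_neg hij']

lemma sum_benefit_sub_le {s : Set (Sym2 V)} {T : Finset (Sym2 V)} (hTs : ↑T ⊆ s)
    (hTi : ∀ e ∈ T, i ∈ e) (hf : ∀ v, 0 ≤ f v) (hδ0 : 0 ≤ δ) (hδ1 : δ ≤ 1) :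
    ∑ e ∈ T, (benefit G f δ i j - benefit (G.deleteEdges {e}) f δ i j) ≤
      benefit G f δ i j - benefit (G.deleteEdges s) f δ i j := by
  obtain ⟨e₀, he₀⟩ := exists_benefit_deleteEdges_eq_of_ne G f δ i j
  by_cases he₀T : e₀ ∈ T
  · rw [Finset.sum_eq_single_of_mem e₀ he₀T fun e he hne => by rw [he₀ e (hTi e he) hne, sub_self]]
    gcongr
    exact benefit_mono (G.deleteEdges_anti (Set.singleton_subset_iff.mpr (hTs he₀T))) hf hδ0 hδ1
  · rw [Finset.sum_eq_zero fun e he => by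
      rw [he₀ e (hTi e he) (ne_of_mem_of_not_mem he he₀T), sub_self]]
    exact sub_nonneg.mpr (benefit_mono (G.deleteEdges_le s) hf hδ0 hδ1)

lemma payoff_sub_payoff_deleteEdges [Fintype V] {s : Set (Sym2 V)} (hs : s ⊆ G.incidenceSet i)
    (c : ℝ) :
    payoff G f δ c i - payoff (G.deleteEdges s) f δ c i =
      ∑ j, (benefit G f δ i j - benefit (G.deleteEdges s) f δ i j) - c * s.ncard := by
  rw [payoff_eq_sum_benefit, payoff_eq_sum_benefit, Finset.sum_sub_distrib,
    ← degree_deleteEdges_add_ncard hs]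
  push_cast
  ring

end Benefit

theorem no_single_severance_implies_no_multi_severance_general
    {V : Type*} [Fintype V] (G : SimpleGraph V)
    (f : V → ℝ) (hf : ∀ v, 0 < f v) (δ : ℝ) (hδ0 : 0 < δ) (hδ1 : δ < 1)
    (c : ℝ) (i : V)
    (hsingle : ∀ e ∈ G.edgeSet, i ∈ e →
      payoff G f δ c i ≥ payoff (G.deleteEdges {e}) f δ c i) :
    ∀ L : Set (Sym2 V), L ⊆ G.edgeSet → (∀ e ∈ L, i ∈ e) →
      payoff G f δ c i ≥ payoff (G.deleteEdges L) f δ c i := by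
  intro L hL hLi
  have hLinc : L ⊆ G.incidenceSet i := fun e he => ⟨hL he, hLi e he⟩
  have hT : ∀ e ∈ L.toFinset, e ∈ G.incidenceSet i := fun e he => hLinc (Set.mem_toFinset.mp he)
  rw [ge_iff_le, ← sub_nonneg, payoff_sub_payoff_deleteEdges hLinc, Set.ncard_eq_toFinset_card' L]
  calc 0 ≤ ∑ e ∈ L.toFinset, (payoff G f δ c i - payoff (G.deleteEdges {e}) f δ c i) :=
        Finset.sum_nonneg fun e he => sub_nonneg.mpr (hsingle e (hT e he).1 (hT e he).2)
    _ = ∑ e ∈ L.toFinset, (∑ j, (benefit G f δ i j - benefit (G.deleteEdges {e}) f δ i j) - c) :=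
        Finset.sum_congr rfl fun e he => by
          rw [payoff_sub_payoff_deleteEdges (Set.singleton_subset_iff.mpr (hT e he)),
            Set.ncard_singleton, Nat.cast_one, mul_one]
    _ = ∑ j, ∑ e ∈ L.toFinset, (benefit G f δ i j - benefit (G.deleteEdges {e}) f δ i j)
          - c * L.toFinset.card := by
        rw [Finset.sum_sub_distrib, Finset.sum_comm, Finset.sum_const, nsmul_eq_mul, mul_comm]
    _ ≤ ∑ j, (benefit G f δ i j - benefit (G.deleteEdges L) f δ i j) - c * L.toFinset.card := by
        gcongr
        exact sum_benefit_sub_le (by simp) (fun e he => (hT e he).2)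
          (fun v => (hf v).le) hδ0.le hδ1.le

theorem no_single_severance_implies_no_multi_severance
    {V : Type*} [Fintype V] (G : SimpleGraph V)
    (f : V → ℝ) (hf : ∀ v, 0 < f v) (δ : ℝ) (hδ0 : 0 < δ) (hδ1 : δ < 1)
    (c : ℝ) (hc : 0 < c) (i : V)
    (hsingle : ∀ e ∈ G.edgeSet, i ∈ e →
      payoff G f δ c i ≥ payoff (G.deleteEdges {e}) f δ c i) :
    ∀ L : Set (Sym2 V), L ⊆ G.edgeSet → (∀ e ∈ L, i ∈ e) →
      payoff G f δ c i ≥ payoff (G.deleteEdges L) f δ c i :=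
  no_single_severance_implies_no_multi_severance_general G f hf δ hδ0 hδ1 c i hsingle
end

section
/- Let S be the star graph on a finite vertex set V with |V| = N ≥ 3, with center v₀ and edges exactly {v₀, l} for every l ≠ v₀. Then: (i) for every peripheral vertex i ≠ v₀, u_i(S) = f(v₀) + δ·Σ_{l ≠ i, l ≠ v₀} f(l) − c, and u_i(S − iv₀) = 0; (ii) for every peripheral vertex j ≠ v₀, u_{v₀}(S) − u_{v₀}(S − v₀j) = f(j) − c. Consequently, S is severance-proof if and only if f(j) ≥ c for every peripheral vertex j and f(v₀) + δ·Σ_{l ≠ i, l ≠ v₀} f(l) ≥ c for every peripheral vertex i. -/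
/-!
In the star a leaf reaches the centre at distance one and every other leaf at distance two,
and cutting its only link isolates it. The centre is adjacent to everything it can reach, in
the star and in any subgraph of it, so its payoff is the sum of `f j - c` over its neighbours;
cutting the link to `j` removes exactly the summand `f j - c`. Severance-proofness is a
condition on the two endpoints of each edge, and every edge of the star joins the centre to a
leaf.
-/

open scoped Classical

/-- `G` is severance-proof: no agent can strictly gain by severing one of its own links. -/
def SeveranceProof {V : Type*} [Fintype V] (G : SimpleGraph V)
    (f : V → ℝ) (δ c : ℝ) : Prop :=
  ∀ i : V, ∀ e ∈ G.edgeSet, i ∈ e →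
    payoff G f δ c i ≥ payoff (G.deleteEdges {e}) f δ c i

open Finset

namespace SimpleGraph

variable {V : Type*} {G : SimpleGraph V}

lemma Reachable.eq_or_adj_of_forall_adj_adj {i j : V}
    (hclosed : ∀ a b, G.Adj i a → G.Adj a b → b = i ∨ G.Adj i b) (h : G.Reachable i j) :
    j = i ∨ G.Adj i j := by
  rw [reachable_iff_reflTransGen] at h
  induction h with
  | refl => exact .inl rfl
  | tail _ hbc ih =>
    rcases ih with rfl | hib
    · exact .inr hbc
    · exact hclosed _ _ hib hbc

lemma dist_eq_two_of_adj_of_adj {i v j : V} (hiv : G.Adj i v) (hvj : G.Adj v j) (hij : i ≠ j)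
    (hnadj : ¬G.Adj i j) : G.dist i j = 2 := by
  have hle : G.dist i j ≤ 2 := by simpa using dist_le (hiv.toWalk.append hvj.toWalk)
  have hne0 : G.dist i j ≠ 0 :=
    dist_ne_zero_iff_ne_and_reachable.2 ⟨hij, hiv.reachable.trans hvj.reachable⟩
  have hne1 : G.dist i j ≠ 1 := fun h => hnadj (dist_eq_one_iff_adj.1 h)
  omega

lemma neighborFinset_deleteEdges_singleton [DecidableEq V] (u v : V)
    [Fintype (G.neighborSet u)] [Fintype ((G.deleteEdges {s(u, v)}).neighborSet u)] :
    (G.deleteEdges {s(u, v)}).neighborFinset u = (G.neighborFinset u).erase v := by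
  ext w
  simp only [mem_erase, mem_neighborFinset, deleteEdges_adj, Set.mem_singleton_iff,
    Sym2.congr_right]
  tauto

end SimpleGraph

open SimpleGraph

section Payoff

variable {V : Type*} [Fintype V] {G : SimpleGraph V} {f : V → ℝ} {δ c : ℝ} {i : V}

lemma payoff_eq_sum_neighborFinset
    (hclosed : ∀ a b, G.Adj i a → G.Adj a b → b = i ∨ G.Adj i b) :
    payoff G f δ c i = ∑ j ∈ G.neighborFinset i, (f j - c) := by
  have hterm : ∀ j, (if j ≠ i ∧ G.Reachable i j then δ ^ (G.dist i j - 1) * f j else 0)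
      = if G.Adj i j then f j else 0 := by
    intro j
    by_cases hij : G.Adj i j
    · simp [hij, hij.ne.symm, hij.reachable, dist_eq_one_iff_adj.2 hij]
    · rw [if_neg hij, if_neg]
      rintro ⟨hji, hreach⟩
      exact (hreach.eq_or_adj_of_forall_adj_adj hclosed).elim hji hij
  rw [payoff, sum_congr rfl fun j _ => hterm j, ← sum_filter,
    ← neighborFinset_eq_filter, ← card_neighborFinset_eq_degree, sum_sub_distrib,
    sum_const, nsmul_eq_mul, mul_comm]

lemma payoff_eq_zero_of_isIsolated (h : G.IsIsolated i) : payoff G f δ c i = 0 := by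
  rw [payoff_eq_sum_neighborFinset fun a _ hia => (h a hia).elim, h.neighborFinset_eq_empty,
    sum_empty]

end Payoff

lemma severanceProof_iff_forall_adj {V : Type*} [Fintype V] {G : SimpleGraph V} {f : V → ℝ}
    {δ c : ℝ} : SeveranceProof G f δ c ↔
      ∀ a b, G.Adj a b → payoff (G.deleteEdges {s(a, b)}) f δ c a ≤ payoff G f δ c a := by
  refine ⟨fun h a b hab => h a _ hab (Sym2.mem_mk_left a b), fun h i e he hie => ?_⟩
  rw [← Sym2.other_spec hie] at he ⊢
  exact h _ _ he

namespace SimpleGraph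

variable {V : Type*}

def IsStar (S : SimpleGraph V) (v₀ : V) : Prop :=
  ∀ a b : V, S.Adj a b ↔ (a = v₀ ∧ b ≠ v₀) ∨ (b = v₀ ∧ a ≠ v₀)

namespace IsStar

variable {S : SimpleGraph V} {v₀ : V}

lemma adj_center (hS : S.IsStar v₀) {l : V} (hl : l ≠ v₀) : S.Adj l v₀ :=
  (hS l v₀).2 (.inr ⟨rfl, hl⟩)

lemma eq_center_of_adj (hS : S.IsStar v₀) {a b : V} (ha : a ≠ v₀) (hab : S.Adj a b) :
    b = v₀ := by
  rcases (hS a b).1 hab with ⟨rfl, _⟩ | ⟨rfl, _⟩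
  · exact absurd rfl ha
  · rfl

lemma forall_adj_iff (hS : S.IsStar v₀) (P : V → V → Prop) :
    (∀ a b, S.Adj a b → P a b) ↔ (∀ j, j ≠ v₀ → P v₀ j) ∧ (∀ i, i ≠ v₀ → P i v₀) := by
  refine ⟨fun h => ⟨fun j hj => h _ _ (hS.adj_center hj).symm,
    fun i hi => h _ _ (hS.adj_center hi)⟩, ?_⟩
  rintro ⟨hcenter, hleaf⟩ a b hab
  rcases (hS a b).1 hab with ⟨rfl, hb⟩ | ⟨rfl, ha⟩
  · exact hcenter b hb
  · exact hleaf a ha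

lemma reachable (hS : S.IsStar v₀) (i j : V) : S.Reachable i j := by
  have hcenter : ∀ l, S.Reachable l v₀ := fun l => by
    obtain rfl | hl := eq_or_ne l v₀
    exacts [.rfl, (hS.adj_center hl).reachable]
  exact (hcenter i).trans (hcenter j).symm

lemma dist_leaves (hS : S.IsStar v₀) {i j : V} (hi : i ≠ v₀) (hj : j ≠ v₀) (hij : i ≠ j) :
    S.dist i j = 2 :=
  dist_eq_two_of_adj_of_adj (hS.adj_center hi) (hS.adj_center hj).symm hij
    fun h => hj (hS.eq_center_of_adj hi h)

variable [Fintype V]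

lemma neighborFinset_leaf (hS : S.IsStar v₀) {i : V} (hi : i ≠ v₀) :
    S.neighborFinset i = {v₀} := by
  ext b
  rw [mem_neighborFinset, mem_singleton]
  exact ⟨hS.eq_center_of_adj hi, fun hb => hb ▸ hS.adj_center hi⟩

variable {f : V → ℝ} {δ c : ℝ}

lemma payoff_leaf (hS : S.IsStar v₀) {i : V} (hi : i ≠ v₀) :
    payoff S f δ c i
      = f v₀ + δ * (∑ l ∈ Finset.univ.filter (fun l => l ≠ i ∧ l ≠ v₀), f l) - c := by
  have hterm : ∀ j, (if j ≠ i ∧ S.Reachable i j then δ ^ (S.dist i j - 1) * f j else 0)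
      = (if v₀ = j then f v₀ else 0) + if j ≠ i ∧ j ≠ v₀ then δ * f j else 0 := by
    intro j
    obtain rfl | hj := eq_or_ne j v₀
    · simp [hi.symm, hS.reachable, dist_eq_one_iff_adj.2 (hS.adj_center hi)]
    obtain rfl | hji := eq_or_ne j i
    · simp [hi.symm]
    · simp [hji, hj, hj.symm, hS.reachable, hS.dist_leaves hi hj hji.symm]
  rw [payoff, sum_congr rfl fun j _ => hterm j, sum_add_distrib,
    sum_ite_eq, ← sum_filter, ← mul_sum, ← card_neighborFinset_eq_degree,
    hS.neighborFinset_leaf hi]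
  simp

lemma payoff_deleteEdges_leaf (hS : S.IsStar v₀) {i : V} (hi : i ≠ v₀) :
    payoff (S.deleteEdges {s(i, v₀)}) f δ c i = 0 := by
  refine payoff_eq_zero_of_isIsolated fun b hb => ?_
  rw [deleteEdges_adj, Set.mem_singleton_iff, Sym2.congr_right] at hb
  exact hb.2 (hS.eq_center_of_adj hi hb.1)

lemma payoff_center_of_le (hS : S.IsStar v₀) {G : SimpleGraph V} (hG : G ≤ S) :
    payoff G f δ c v₀ = ∑ j ∈ G.neighborFinset v₀, (f j - c) :=
  payoff_eq_sum_neighborFinset fun _ _ hva hab =>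
    .inl (hS.eq_center_of_adj (hG hva).ne.symm (hG hab))

lemma payoff_center_sub_deleteEdges (hS : S.IsStar v₀) {j : V} (hj : j ≠ v₀) :
    payoff S f δ c v₀ - payoff (S.deleteEdges {s(v₀, j)}) f δ c v₀ = f j - c := by
  have hmem : j ∈ S.neighborFinset v₀ := (mem_neighborFinset _ _ _).2 (hS.adj_center hj).symm
  rw [hS.payoff_center_of_le le_rfl, hS.payoff_center_of_le (deleteEdges_le _),
    neighborFinset_deleteEdges_singleton, ← add_sum_erase _ _ hmem, add_sub_cancel_right]

end IsStar

end SimpleGraph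

theorem star_payoffs_and_severanceProof_iff_general
    {V : Type*} [Fintype V] (f : V → ℝ) (δ : ℝ) (c : ℝ) (v₀ : V) (S : SimpleGraph V)
    (hS : ∀ a b : V, S.Adj a b ↔ (a = v₀ ∧ b ≠ v₀) ∨ (b = v₀ ∧ a ≠ v₀)) :
    (∀ i : V, i ≠ v₀ →
      payoff S f δ c i
        = f v₀ + δ * (∑ l ∈ Finset.univ.filter (fun l => l ≠ i ∧ l ≠ v₀), f l) - c ∧
      payoff (S.deleteEdges {s(i, v₀)}) f δ c i = 0) ∧
    (∀ j : V, j ≠ v₀ →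
      payoff S f δ c v₀ - payoff (S.deleteEdges {s(v₀, j)}) f δ c v₀ = f j - c) ∧
    (SeveranceProof S f δ c ↔
      (∀ j : V, j ≠ v₀ → f j ≥ c) ∧
      (∀ i : V, i ≠ v₀ →
        f v₀ + δ * (∑ l ∈ Finset.univ.filter (fun l => l ≠ i ∧ l ≠ v₀), f l) ≥ c)) := by
  have hstar : S.IsStar v₀ := hS
  refine ⟨fun i hi => ⟨hstar.payoff_leaf hi, hstar.payoff_deleteEdges_leaf hi⟩,
    fun j hj => hstar.payoff_center_sub_deleteEdges hj, ?_⟩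
  rw [severanceProof_iff_forall_adj, hstar.forall_adj_iff]
  refine and_congr (forall₂_congr fun j hj => ?_) (forall₂_congr fun i hi => ?_)
  · have := hstar.payoff_center_sub_deleteEdges (f := f) (δ := δ) (c := c) hj
    constructor <;> intro <;> linarith
  · rw [hstar.payoff_leaf hi, hstar.payoff_deleteEdges_leaf hi]
    constructor <;> intro <;> linarith

theorem star_payoffs_and_severanceProof_iff
    {V : Type*} [Fintype V] (hcard : 3 ≤ Fintype.card V)
    (f : V → ℝ) (hf : ∀ v, 0 < f v) (δ : ℝ) (hδ0 : 0 < δ) (hδ1 : δ < 1)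
    (c : ℝ) (hc : 0 < c)
    (v₀ : V) (S : SimpleGraph V)
    (hS : ∀ a b : V, S.Adj a b ↔ (a = v₀ ∧ b ≠ v₀) ∨ (b = v₀ ∧ a ≠ v₀)) :
    (∀ i : V, i ≠ v₀ →
      payoff S f δ c i
        = f v₀ + δ * (∑ l ∈ Finset.univ.filter (fun l => l ≠ i ∧ l ≠ v₀), f l) - c ∧
      payoff (S.deleteEdges {s(i, v₀)}) f δ c i = 0) ∧
    (∀ j : V, j ≠ v₀ →
      payoff S f δ c v₀ - payoff (S.deleteEdges {s(v₀, j)}) f δ c v₀ = f j - c) ∧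
    (SeveranceProof S f δ c ↔
      (∀ j : V, j ≠ v₀ → f j ≥ c) ∧
      (∀ i : V, i ≠ v₀ →
        f v₀ + δ * (∑ l ∈ Finset.univ.filter (fun l => l ≠ i ∧ l ≠ v₀), f l) ≥ c)) :=
  star_payoffs_and_severanceProof_iff_general f δ c v₀ S hS
end

section
/- Let G be a tree on a finite vertex set V with |V| ≥ 2, let ij be an edge of G, let v be a new vertex not in V, and let G' be the graph on V ∪ {v} obtained from G by deleting edge ij and adding edges iv and vj. Extend f to v with f(v) > 0. Then there exists δ₀ ∈ (0,1) such that for every decay factor δ ∈ (δ₀, 1): (i) u_w(G') > u_w(G) for every w ∈ V; and (ii) if moreover Σ_{w ∈ V} f(w) > 2c, then u_v(G') > 0. -/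
/-!
The payoffs are continuous in `δ`, and at `δ = 1` an agent of a connected network collects the
full value of all other agents minus its link costs. Subdividing the edge `ij` by `v` keeps the
network connected and leaves every original degree unchanged, so at `δ = 1` each original agent
gains exactly `f v`, while `v` earns `∑ f - 2c`; by continuity these strict inequalities persist
for `δ` close to `1`.
-/

open scoped Classical

open Filter Topology SimpleGraph Finset

def IsEdgeSubdivision {V : Type*} (G : SimpleGraph V) (i j : V) (G' : SimpleGraph (Option V)) :
    Prop :=
  ∀ a b : Option V, G'.Adj a b ↔
    ((∃ x y : V, a = some x ∧ b = some y ∧ G.Adj x y ∧ s(x, y) ≠ s(i, j)) ∨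
      (a = none ∧ (b = some i ∨ b = some j)) ∨
      (b = none ∧ (a = some i ∨ a = some j)))

namespace IsEdgeSubdivision

variable {V : Type*} {G : SimpleGraph V} {i j : V} {G' : SimpleGraph (Option V)}

theorem adj_some_some (h : IsEdgeSubdivision G i j G') {x y : V} :
    G'.Adj (some x) (some y) ↔ G.Adj x y ∧ s(x, y) ≠ s(i, j) := by
  rw [h]
  simp

theorem adj_some_none (h : IsEdgeSubdivision G i j G') {x : V} :
    G'.Adj (some x) none ↔ x = i ∨ x = j := by
  rw [h]
  simp

theorem adj_none_some (h : IsEdgeSubdivision G i j G') {x : V} :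
    G'.Adj none (some x) ↔ x = i ∨ x = j := by
  rw [G'.adj_comm, h.adj_some_none]

theorem reachable_some_of_adj (h : IsEdgeSubdivision G i j G') {x y : V} (hxy : G.Adj x y) :
    G'.Reachable (some x) (some y) := by
  by_cases hs : s(x, y) = s(i, j)
  · have hx : x = i ∨ x = j := Sym2.mem_iff.mp (hs ▸ Sym2.mem_mk_left x y)
    have hy : y = i ∨ y = j := Sym2.mem_iff.mp (hs ▸ Sym2.mem_mk_right x y)
    exact (h.adj_some_none.2 hx).reachable.trans (h.adj_none_some.2 hy).reachable
  · exact (h.adj_some_some.2 ⟨hxy, hs⟩).reachable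

theorem reachable_some (h : IsEdgeSubdivision G i j G') {x y : V} (hxy : G.Reachable x y) :
    G'.Reachable (some x) (some y) := by
  rw [reachable_iff_reflTransGen] at hxy ⊢
  refine Relation.ReflTransGen.lift' some (fun a b hab => ?_) x y hxy
  exact (reachable_iff_reflTransGen _ _).1 (h.reachable_some_of_adj hab)

theorem preconnected (h : IsEdgeSubdivision G i j G') (hG : G.Preconnected) : G'.Preconnected := by
  have hnone : ∀ a, G'.Reachable none a
    | none => .rfl
    | some x => (h.adj_none_some.2 (Or.inl rfl)).reachable.trans (h.reachable_some (hG i x))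
  exact fun a b => (hnone a).symm.trans (hnone b)

variable [Fintype V]

theorem degree_none (h : IsEdgeSubdivision G i j G') (hij : i ≠ j) : G'.degree none = 2 := by
  have hN : G'.neighborFinset none = {some i, some j} := by
    ext (_ | x) <;> simp [h.adj_none_some]
  rw [← card_neighborFinset_eq_degree, hN, card_pair (by simpa)]

theorem degree_some (h : IsEdgeSubdivision G i j G') (hadj : G.Adj i j) (w : V) :
    G'.degree (some w) = G.degree w := by
  set kept := #{y | G.Adj w y ∧ s(w, y) ≠ s(i, j)}
  have hremoved : #{y | s(w, y) = s(i, j)} = if w = i ∨ w = j then 1 else 0 := by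
    rcases eq_or_ne w i with rfl | hwi
    · simp [hadj.ne, card_eq_one, Finset.ext_iff]
    rcases eq_or_ne w j with rfl | hwj
    · simp [Sym2.eq_swap (a := i), hwi, card_eq_one, Finset.ext_iff]
    · simp [hwi, hwj]
  have hG : G.degree w = kept + #{y | s(w, y) = s(i, j)} := by
    rw [← card_neighborFinset_eq_degree, neighborFinset_eq_filter,
      ← card_filter_add_card_filter_not (fun y => s(w, y) ≠ s(i, j)),
      filter_filter, filter_filter]
    congr 2
    ext y
    simp only [mem_filter, mem_univ, true_and, not_not, and_iff_right_iff_imp]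
    intro hs
    rw [← mem_edgeSet, hs]
    exact hadj
  have hG' : G'.degree (some w) = (if w = i ∨ w = j then 1 else 0) + kept := by
    rw [← card_neighborFinset_eq_degree, neighborFinset_eq_filter, card_filter,
      Fintype.sum_option]
    simp only [h.adj_some_none, h.adj_some_some, kept, card_filter]
  omega

end IsEdgeSubdivision

section Payoff

variable {V : Type*} [Fintype V] (G : SimpleGraph V) (f : V → ℝ) (c : ℝ)

theorem continuous_payoff (i : V) : Continuous fun δ => payoff G f δ c i := by
  refine (continuous_finsetSum _ fun j _ => ?_).sub continuous_const
  split_ifs <;> fun_prop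

theorem payoff_one_of_preconnected (hG : G.Preconnected) (i : V) :
    payoff G f 1 c i = ∑ j, f j - f i - c * G.degree i := by
  have hterm (j : V) : (if j ≠ i ∧ G.Reachable i j then (1 : ℝ) ^ (G.dist i j - 1) * f j else 0)
      = f j - if j = i then f j else 0 := by
    by_cases hji : j = i <;> simp [hji, hG i j]
  simp only [payoff, hterm, sum_sub_distrib, sum_ite_eq', mem_univ, if_true]

end Payoff

theorem exists_forall_Ioo_one_of_eventually_nhds {P : ℝ → Prop} (h : ∀ᶠ δ in 𝓝 1, P δ) :
    ∃ δ₀ : ℝ, 0 < δ₀ ∧ δ₀ < 1 ∧ ∀ δ, δ₀ < δ → δ < 1 → P δ := by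
  obtain ⟨l, hl, hsub⟩ := mem_nhdsLT_iff_exists_Ioo_subset.1 (nhdsWithin_le_nhds h)
  refine ⟨max l (1 / 2), by positivity, max_lt hl (by norm_num), fun δ hlδ hδ1 => ?_⟩
  exact hsub ⟨(le_max_left _ _).trans_lt hlδ, hδ1⟩

theorem tree_insertion_improves_payoffs_general
    {V : Type*} [Fintype V] (G : SimpleGraph V) (htree : G.IsTree)
    (i j : V) (hadj : G.Adj i j)
    (f : V → ℝ) (c : ℝ)
    (f' : Option V → ℝ) (hf'some : ∀ w : V, f' (some w) = f w) (hf'v : 0 < f' none)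
    (G' : SimpleGraph (Option V))
    (hG' : ∀ a b : Option V, G'.Adj a b ↔
      ((∃ x y : V, a = some x ∧ b = some y ∧ G.Adj x y ∧ s(x, y) ≠ s(i, j)) ∨
        (a = none ∧ (b = some i ∨ b = some j)) ∨
        (b = none ∧ (a = some i ∨ a = some j)))) :
    ∃ δ₀ : ℝ, 0 < δ₀ ∧ δ₀ < 1 ∧
      ∀ δ : ℝ, δ₀ < δ → δ < 1 →
        (∀ w : V, payoff G' f' δ c (some w) > payoff G f δ c w) ∧
        ((∑ w : V, f w) > 2 * c → payoff G' f' δ c none > 0) := by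
  have hsub : IsEdgeSubdivision G i j G' := hG'
  have hG : G.Preconnected := htree.connected.preconnected
  have hG'conn : G'.Preconnected := hsub.preconnected hG
  have htotal : ∑ a, f' a = f' none + ∑ w, f w := by simp [Fintype.sum_option, hf'some]
  have hsome (w : V) : payoff G f 1 c w < payoff G' f' 1 c (some w) := by
    rw [payoff_one_of_preconnected G f c hG, payoff_one_of_preconnected G' f' c hG'conn,
      htotal, hf'some, hsub.degree_some hadj]
    linarith
  have hnone (hS : ∑ w, f w > 2 * c) : 0 < payoff G' f' 1 c none := by
    rw [payoff_one_of_preconnected G' f' c hG'conn, htotal, hsub.degree_none hadj.ne]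
    push_cast
    linarith
  refine exists_forall_Ioo_one_of_eventually_nhds ((eventually_all.2 fun w => ?_).and
    (eventually_imp_distrib_left.2 fun hS => ?_))
  · exact (continuous_payoff G f c w).continuousAt.eventually_lt
      (continuous_payoff G' f' c _).continuousAt (hsome w)
  · exact continuousAt_const.eventually_lt (continuous_payoff G' f' c none).continuousAt
      (hnone hS)

/-- Inserting a new agent `v` (modelled as `none : Option V`) between the endpoints
`i`, `j` of an edge of a tree `G`: for `δ` close enough to `1`, every original
agent's payoff strictly increases, and the inserted agent's payoff is strictly
positive whenever the total value of the original agents exceeds `2c`. -/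
theorem tree_insertion_improves_payoffs
    {V : Type*} [Fintype V] (G : SimpleGraph V) (htree : G.IsTree)
    (hcard : 2 ≤ Fintype.card V) (i j : V) (hadj : G.Adj i j)
    (f : V → ℝ) (hf : ∀ v, 0 < f v) (c : ℝ) (hc : 0 < c)
    (f' : Option V → ℝ) (hf'some : ∀ w : V, f' (some w) = f w) (hf'v : 0 < f' none)
    (G' : SimpleGraph (Option V))
    (hG' : ∀ a b : Option V, G'.Adj a b ↔
      ((∃ x y : V, a = some x ∧ b = some y ∧ G.Adj x y ∧ s(x, y) ≠ s(i, j)) ∨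
        (a = none ∧ (b = some i ∨ b = some j)) ∨
        (b = none ∧ (a = some i ∨ a = some j)))) :
    ∃ δ₀ : ℝ, 0 < δ₀ ∧ δ₀ < 1 ∧
      ∀ δ : ℝ, δ₀ < δ → δ < 1 →
        (∀ w : V, payoff G' f' δ c (some w) > payoff G f δ c w) ∧
        ((∑ w : V, f w) > 2 * c → payoff G' f' δ c none > 0) :=
  tree_insertion_improves_payoffs_general G htree i j hadj f c f' hf'some hf'v G' hG'
end
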